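/- Let α ∈ (1,2), ρ ∈ (1−1/α, 1/α), ρ̂ = 1−ρ. For every λ > 0, ∫_0^∞ e^{−λx} · [ Γ(2−α)/Γ(1−αρ) + ((1−αρ̂)/Γ(αρ̂)) ∫_x^∞ e^{αρ z} (e^{z}−1)^{αρ̂−2} dz ] dx = Γ(2−α+λ) / (λ·Γ(1−αρ+λ)). -/

import Mathlib

/-!
With `p = αρ̂` and `q = 2 - α` (so that `p + q - 1 = 1 - αρ`), the inner integrand is
`g z = (1 - e^{-z})^{p-2} e^{-qz}`. By Fubini, the Laplace transform of the tail `∫_x^∞ g` is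
`λ⁻¹ ∫_0^∞ (1 - e^{-λz}) g z dz`. Since `g` itself is not integrable at `0`, this regularised
Beta integral is evaluated by integrating the derivative of
`(1 - e^{-z})^{p-1} (e^{-qz} - e^{-(q+λ)z})`, which expresses it through the convergent Beta
integrals `∫_0^∞ (1 - e^{-z})^{p-1} e^{-sz} dz = Γ(p)Γ(s)/Γ(p+s)` for `s = q, q + λ`
(substitute `t = 1 - e^{-z}`). The recursion `Γ(x + 1) = xΓ(x)` then collapses the result to
`Γ(q+λ) / (λ Γ(p+q+λ-1))`.
-/

open MeasureTheory Set Real Filter Topology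

lemma ofReal_rpow_mul_one_sub_rpow {t : ℝ} (ht : t ∈ Icc 0 1) (p q : ℝ) :
    ((t ^ (p - 1) * (1 - t) ^ (q - 1) : ℝ) : ℂ) =
      (t : ℂ) ^ ((p : ℂ) - 1) * (1 - t) ^ ((q : ℂ) - 1) := by
  rw [Complex.ofReal_mul, Complex.ofReal_cpow ht.1, Complex.ofReal_cpow (sub_nonneg.2 ht.2)]
  push_cast
  rfl

lemma integrableOn_rpow_mul_one_sub_rpow {p q : ℝ} (hp : 0 < p) (hq : 0 < q) :
    IntegrableOn (fun t : ℝ => t ^ (p - 1) * (1 - t) ^ (q - 1)) (Ioc 0 1) := by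
  have h : IntegrableOn
      (fun t : ℝ => ((t : ℂ) ^ ((p : ℂ) - 1) * (1 - t) ^ ((q : ℂ) - 1)).re) (Ioc 0 1) :=
    (Complex.betaIntegral_convergent (u := p) (v := q) (by simpa) (by simpa)).1.re
  refine h.congr_fun (fun t ht => ?_) measurableSet_Ioc
  simp only [← ofReal_rpow_mul_one_sub_rpow (Ioc_subset_Icc_self ht), Complex.ofReal_re]

lemma integral_rpow_mul_one_sub_rpow {p q : ℝ} (hp : 0 < p) (hq : 0 < q) :
    ∫ t in (0:ℝ)..1, t ^ (p - 1) * (1 - t) ^ (q - 1) = Gamma p * Gamma q / Gamma (p + q) := by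
  have h := Complex.betaIntegral_eq_Gamma_mul_div p q (by simpa) (by simpa)
  rw [Complex.betaIntegral, ← intervalIntegral.integral_congr (fun t ht =>
    ofReal_rpow_mul_one_sub_rpow (uIcc_of_le (zero_le_one' ℝ) ▸ ht) p q),
    intervalIntegral.integral_ofReal, ← Complex.ofReal_add,
    Complex.Gamma_ofReal, Complex.Gamma_ofReal, Complex.Gamma_ofReal] at h
  exact_mod_cast h

lemma one_sub_exp_neg_pos {z : ℝ} (hz : 0 < z) : 0 < 1 - exp (-z) := by
  simpa using hz

lemma image_one_sub_exp_neg_Ioi : (fun z => 1 - exp (-z)) '' Ioi 0 = Ioo 0 1 := by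
  ext t
  constructor
  · rintro ⟨z, hz, rfl⟩
    exact ⟨by simpa using hz, by simpa using exp_pos (-z)⟩
  · rintro ⟨ht0, ht1⟩
    refine ⟨-log (1 - t), neg_pos.2 (log_neg (by linarith) (by linarith)), ?_⟩
    simp [exp_log (show 0 < 1 - t by linarith)]

lemma hasDerivAt_one_sub_exp_neg (z : ℝ) : HasDerivAt (fun z => 1 - exp (-z)) (exp (-z)) z := by
  simpa using ((hasDerivAt_neg z).exp).const_sub 1

lemma injOn_one_sub_exp_neg : InjOn (fun z => 1 - exp (-z)) (Ioi 0) := fun x _ y _ h => by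
  simpa using h

lemma integral_Ioo_zero_one_eq_integral_Ioi (ψ : ℝ → ℝ) :
    ∫ t in Ioo 0 1, ψ t = ∫ z in Ioi 0, exp (-z) * ψ (1 - exp (-z)) := by
  rw [← image_one_sub_exp_neg_Ioi, integral_image_eq_integral_abs_deriv_smul measurableSet_Ioi
    (fun z _ => (hasDerivAt_one_sub_exp_neg z).hasDerivWithinAt) injOn_one_sub_exp_neg]
  simp [abs_of_pos (exp_pos _)]

lemma integrableOn_Ioo_zero_one_iff (ψ : ℝ → ℝ) :
    IntegrableOn ψ (Ioo 0 1) ↔ IntegrableOn (fun z => exp (-z) * ψ (1 - exp (-z))) (Ioi 0) := by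
  rw [← image_one_sub_exp_neg_Ioi, integrableOn_image_iff_integrableOn_abs_deriv_smul
    measurableSet_Ioi (fun z _ => (hasDerivAt_one_sub_exp_neg z).hasDerivWithinAt)
    injOn_one_sub_exp_neg]
  simp [abs_of_pos (exp_pos _)]

lemma exp_neg_mul_beta_integrand (p q z : ℝ) :
    exp (-z) * ((1 - exp (-z)) ^ (p - 1) * (1 - (1 - exp (-z))) ^ (q - 1)) =
      (1 - exp (-z)) ^ (p - 1) * exp (-q * z) := by
  rw [sub_sub_cancel, ← exp_mul, mul_left_comm, ← exp_add]
  ring_nf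

theorem integrableOn_one_sub_exp_neg_rpow_mul_exp {p q : ℝ} (hp : 0 < p) (hq : 0 < q) :
    IntegrableOn (fun z => (1 - exp (-z)) ^ (p - 1) * exp (-q * z)) (Ioi 0) := by
  have h := (integrableOn_Ioo_zero_one_iff _).1
    ((integrableOn_rpow_mul_one_sub_rpow hp hq).mono_set Ioo_subset_Ioc_self)
  simpa only [exp_neg_mul_beta_integrand] using h

theorem integral_one_sub_exp_neg_rpow_mul_exp {p q : ℝ} (hp : 0 < p) (hq : 0 < q) :
    ∫ z in Ioi 0, (1 - exp (-z)) ^ (p - 1) * exp (-q * z) =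
      Gamma p * Gamma q / Gamma (p + q) := by
  rw [← integral_rpow_mul_one_sub_rpow hp hq, intervalIntegral.integral_of_le zero_le_one,
    integral_Ioc_eq_integral_Ioo, integral_Ioo_zero_one_eq_integral_Ioi]
  simp only [exp_neg_mul_beta_integrand]

lemma one_sub_exp_neg_mul_le {lam z : ℝ} (hz : 0 ≤ z) :
    1 - exp (-lam * z) ≤ max 1 lam * (1 - exp (-z)) := by
  rcases le_total lam 1 with h | h
  · rw [max_eq_left h, one_mul]
    gcongr
    nlinarith
  · rw [max_eq_right h]
    have := one_add_mul_self_le_rpow_one_add (s := exp (-z) - 1) (by linarith [exp_pos (-z)]) h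
    rw [add_sub_cancel, ← exp_mul] at this
    rw [neg_mul_comm, mul_comm]
    linarith

theorem integrableOn_one_sub_exp_neg_rpow_mul_exp_mul_one_sub_exp {p q lam : ℝ} (hp : 0 < p)
    (hq : 0 < q) (hlam : 0 ≤ lam) :
    IntegrableOn (fun z => (1 - exp (-z)) ^ (p - 2) * exp (-q * z) * (1 - exp (-lam * z)))
      (Ioi 0) := by
  refine ((integrableOn_one_sub_exp_neg_rpow_mul_exp hp hq).const_mul (max 1 lam)).mono'
    (by fun_prop) ((ae_restrict_iff' measurableSet_Ioi).2 (.of_forall fun z (hz : 0 < z) => ?_))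
  have hu := one_sub_exp_neg_pos hz
  have hlamz : 0 ≤ 1 - exp (-lam * z) := by simpa using mul_nonneg hlam hz.le
  rw [norm_of_nonneg (by positivity), show p - 1 = p - 2 + 1 by ring, rpow_add_one hu.ne']
  calc (1 - exp (-z)) ^ (p - 2) * exp (-q * z) * (1 - exp (-lam * z))
      ≤ (1 - exp (-z)) ^ (p - 2) * exp (-q * z) * (max 1 lam * (1 - exp (-z))) := by
        gcongr; exact one_sub_exp_neg_mul_le hz.le
    _ = _ := by ring

lemma hasDerivAt_exp_neg_mul (q z : ℝ) :
    HasDerivAt (fun z => exp (-q * z)) (-q * exp (-q * z)) z := by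
  simpa [mul_comm] using ((hasDerivAt_id z).const_mul (-q)).exp

lemma exp_neg_mul_sub_exp_neg_mul (q lam z : ℝ) :
    exp (-q * z) - exp (-(q + lam) * z) = exp (-q * z) * (1 - exp (-lam * z)) := by
  rw [mul_one_sub, ← exp_add]
  ring_nf

lemma hasDerivAt_one_sub_exp_neg_rpow_mul_sub {p q lam z : ℝ} (hz : 0 < z) :
    HasDerivAt (fun z => (1 - exp (-z)) ^ (p - 1) * (exp (-q * z) - exp (-(q + lam) * z)))
      ((p - 1) * ((1 - exp (-z)) ^ (p - 2) * exp (-q * z) * (1 - exp (-lam * z))) +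
        ((p + q + lam - 1) * ((1 - exp (-z)) ^ (p - 1) * exp (-(q + lam) * z)) -
          (p + q - 1) * ((1 - exp (-z)) ^ (p - 1) * exp (-q * z)))) z := by
  have hu := one_sub_exp_neg_pos hz
  refine (((hasDerivAt_one_sub_exp_neg z).rpow_const (p := p - 1) (.inl hu.ne')).fun_mul
    ((hasDerivAt_exp_neg_mul q z).fun_sub (hasDerivAt_exp_neg_mul (q + lam) z))).congr_deriv ?_
  have hpow : (1 - exp (-z)) ^ (p - 1) = (1 - exp (-z)) ^ (p - 2) * (1 - exp (-z)) := by
    rw [show p - 1 = p - 2 + 1 by ring, rpow_add_one hu.ne']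
  have hexp : exp (-lam * z) * exp (-q * z) = exp (-(q + lam) * z) := by
    rw [← exp_add]; ring_nf
  rw [hpow, show p - 1 - 1 = p - 2 by ring]
  linear_combination (p - 1) * (1 - exp (-z)) ^ (p - 2) * hexp

lemma continuousWithinAt_one_sub_exp_neg_rpow_mul_sub {p q lam : ℝ} (hp : 0 < p) (hq : 0 ≤ q)
    (hlam : 0 ≤ lam) :
    ContinuousWithinAt (fun z => (1 - exp (-z)) ^ (p - 1) * (exp (-q * z) - exp (-(q + lam) * z)))
      (Ici 0) 0 := by
  rw [← continuousWithinAt_Ioi_iff_Ici, ContinuousWithinAt]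
  simp only [mul_zero, neg_zero, exp_zero, sub_self]
  have hlim : Tendsto (fun z => max 1 lam * (1 - exp (-z)) ^ p) (𝓝[>] 0) (𝓝 0) := by
    have hc : Continuous fun z => max 1 lam * (1 - exp (-z)) ^ p :=
      continuous_const.mul ((by fun_prop : Continuous fun z => 1 - exp (-z)).rpow_const
        fun _ => .inr hp.le)
    simpa [zero_rpow hp.ne'] using (hc.tendsto 0).mono_left nhdsWithin_le_nhds
  refine squeeze_zero_norm' ?_ hlim
  filter_upwards [self_mem_nhdsWithin] with z (hz : 0 < z)
  have hu := one_sub_exp_neg_pos hz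
  have hlamz : 0 ≤ 1 - exp (-lam * z) := by simpa using mul_nonneg hlam hz.le
  rw [exp_neg_mul_sub_exp_neg_mul, norm_of_nonneg (by positivity)]
  calc (1 - exp (-z)) ^ (p - 1) * (exp (-q * z) * (1 - exp (-lam * z)))
      ≤ (1 - exp (-z)) ^ (p - 1) * (1 * (max 1 lam * (1 - exp (-z)))) := by
        gcongr
        · exact exp_le_one_iff.2 (by nlinarith)
        · exact one_sub_exp_neg_mul_le hz.le
    _ = max 1 lam * (1 - exp (-z)) ^ p := by
        rw [rpow_sub_one hu.ne']; field_simp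

lemma tendsto_one_sub_exp_neg_rpow_mul_sub_atTop {p q lam : ℝ} (hq : 0 < q)
    (hqlam : 0 < q + lam) :
    Tendsto (fun z => (1 - exp (-z)) ^ (p - 1) * (exp (-q * z) - exp (-(q + lam) * z))) atTop
      (𝓝 0) := by
  have hu : Tendsto (fun z => 1 - exp (-z)) atTop (𝓝 1) := by
    simpa using tendsto_exp_neg_atTop_nhds_zero.const_sub 1
  have he : ∀ s > 0, Tendsto (fun z => exp (-s * z)) atTop (𝓝 0) := fun s hs => by
    simp only [neg_mul]
    exact tendsto_exp_neg_atTop_nhds_zero.comp (tendsto_id.const_mul_atTop hs)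
  simpa using (hu.rpow_const (.inl one_ne_zero)).mul ((he q hq).sub (he _ hqlam))

/-- Integrate the derivative of `(1 - e^{-z})^{p-1} (e^{-qz} - e^{-(q+λ)z})`, which vanishes at
`0` and at `∞`. -/
theorem one_sub_mul_integral_one_sub_exp_neg_rpow_mul_exp_mul_one_sub_exp {p q lam : ℝ}
    (hp : 0 < p) (hq : 0 < q) (hlam : 0 ≤ lam) :
    (1 - p) * ∫ z in Ioi 0, (1 - exp (-z)) ^ (p - 2) * exp (-q * z) * (1 - exp (-lam * z)) =
      (p + q + lam - 1) * (∫ z in Ioi 0, (1 - exp (-z)) ^ (p - 1) * exp (-(q + lam) * z)) -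
        (p + q - 1) * ∫ z in Ioi 0, (1 - exp (-z)) ^ (p - 1) * exp (-q * z) := by
  have hqlam : 0 < q + lam := by linarith
  have hj := integrableOn_one_sub_exp_neg_rpow_mul_exp_mul_one_sub_exp hp hq hlam
  have hk := integrableOn_one_sub_exp_neg_rpow_mul_exp hp hq
  have hk' := integrableOn_one_sub_exp_neg_rpow_mul_exp hp hqlam
  have hK : IntegrableOn (fun z => (p + q + lam - 1) * ((1 - exp (-z)) ^ (p - 1) *
      exp (-(q + lam) * z)) - (p + q - 1) * ((1 - exp (-z)) ^ (p - 1) * exp (-q * z))) (Ioi 0) :=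
    (hk'.const_mul _).sub (hk.const_mul _)
  have h := integral_Ioi_of_hasDerivAt_of_tendsto
    (continuousWithinAt_one_sub_exp_neg_rpow_mul_sub hp hq.le hlam)
    (fun z hz => hasDerivAt_one_sub_exp_neg_rpow_mul_sub hz) ((hj.const_mul (p - 1)).add hK)
    (tendsto_one_sub_exp_neg_rpow_mul_sub_atTop hq hqlam)
  rw [integral_add (hj.const_mul _) hK, integral_sub (hk'.const_mul _) (hk.const_mul _),
    integral_const_mul, integral_const_mul, integral_const_mul] at h
  simp only [mul_zero, neg_zero, exp_zero, sub_self] at h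
  linear_combination -h

lemma integral_Ioi_indicator_Iio_exp_neg_mul {lam z : ℝ} (hlam : 0 < lam) (hz : 0 ≤ z) :
    ∫ x in Ioi 0, (Iio z).indicator (fun x => exp (-lam * x)) x = (1 - exp (-lam * z)) / lam := by
  rw [integral_indicator measurableSet_Iio, Measure.restrict_restrict measurableSet_Iio,
    Iio_inter_Ioi, ← integral_Ioc_eq_integral_Ioo, ← intervalIntegral.integral_of_le hz,
    intervalIntegral.integral_comp_mul_left (fun x => exp x) (neg_ne_zero.2 hlam.ne'),
    integral_exp, mul_zero, exp_zero, smul_eq_mul]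
  field_simp
  ring_nf

theorem integral_exp_neg_mul_integral_Ioi {g : ℝ → ℝ} {lam : ℝ} (hlam : 0 < lam)
    (hg : Measurable g) (hint : IntegrableOn (fun z => g z * (1 - exp (-lam * z))) (Ioi 0)) :
    IntegrableOn (fun x => exp (-lam * x) * ∫ z in Ioi x, g z) (Ioi 0) ∧
      ∫ x in Ioi 0, exp (-lam * x) * ∫ z in Ioi x, g z =
        lam⁻¹ * ∫ z in Ioi 0, g z * (1 - exp (-lam * z)) := by
  set μ := volume.restrict (Ioi (0 : ℝ))
  set f : ℝ → ℝ → ℝ := fun x z => (Iio z).indicator (fun x => exp (-lam * x)) x * g z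
  have hf_meas : Measurable (Function.uncurry f) := by
    refine Measurable.mul ?_ (hg.comp measurable_snd)
    simp only [indicator_apply]
    exact Measurable.ite (measurableSet_lt measurable_fst measurable_snd) (by fun_prop)
      measurable_const
  have hslice_x : ∀ x > 0, ∫ z, f x z ∂μ = exp (-lam * x) * ∫ z in Ioi x, g z := by
    intro x hx
    have : (fun z => f x z) = (Ioi x).indicator (fun z => exp (-lam * x) * g z) := by
      ext z; by_cases h : x < z <;> simp [f, h]
    rw [this, integral_indicator measurableSet_Ioi, Measure.restrict_restrict measurableSet_Ioi,
      inter_eq_self_of_subset_left (Ioi_subset_Ioi hx.le), integral_const_mul]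
  have hslice_z : ∀ z > 0, ∫ x, f x z ∂μ = lam⁻¹ * (g z * (1 - exp (-lam * z))) := by
    intro z hz
    rw [integral_mul_const, integral_Ioi_indicator_Iio_exp_neg_mul hlam hz.le]
    ring
  have hnorm_z : ∀ z > 0,
      ∫ x, ‖f x z‖ ∂μ = lam⁻¹ * ‖g z * (1 - exp (-lam * z))‖ := by
    intro z hz
    have hlamz : 0 ≤ 1 - exp (-lam * z) := by simpa using mul_nonneg hlam.le hz.le
    simp only [f, norm_mul, norm_indicator_eq_indicator_norm, norm_of_nonneg (exp_pos _).le,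
      norm_of_nonneg hlamz]
    rw [integral_mul_const, integral_Ioi_indicator_Iio_exp_neg_mul hlam hz.le]
    ring
  have hf_int : Integrable (Function.uncurry f) (μ.prod μ) := by
    refine (integrable_prod_iff' hf_meas.aestronglyMeasurable).2 ⟨.of_forall fun z => ?_, ?_⟩
    · exact ((exp_neg_integrableOn_Ioi 0 hlam).indicator measurableSet_Iio).mul_const (g z)
    · refine (hint.norm.const_mul lam⁻¹).congr ?_
      filter_upwards [ae_restrict_mem measurableSet_Ioi] with z hz
      exact (hnorm_z z hz).symm
  have h_left :
      (fun x => ∫ z, f x z ∂μ) =ᵐ[μ] fun x => exp (-lam * x) * ∫ z in Ioi x, g z := by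
    filter_upwards [ae_restrict_mem measurableSet_Ioi] with x hx using hslice_x x hx
  refine ⟨hf_int.integral_prod_left.congr h_left, ?_⟩
  rw [← integral_congr_ae h_left, integral_integral_swap hf_int, ← integral_const_mul]
  refine setIntegral_congr_fun measurableSet_Ioi fun z hz => hslice_z z hz

lemma mul_Gamma_mul_Gamma_div_Gamma_add {p s : ℝ} (h : 0 < p + s - 1) :
    (p + s - 1) * (Gamma p * Gamma s / Gamma (p + s)) = Gamma p * Gamma s / Gamma (p + s - 1) := by
  rw [show p + s = p + s - 1 + 1 by ring, Gamma_add_one h.ne', add_sub_cancel_right]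
  have := (Gamma_pos_of_pos h).ne'
  field_simp

theorem one_sub_mul_integral_one_sub_exp_neg_rpow_mul_exp_mul_one_sub_exp_eq_Gamma {p q lam : ℝ}
    (hp : 0 < p) (hq : 0 < q) (hlam : 0 ≤ lam) (hpq : 0 < p + q - 1) :
    (1 - p) * ∫ z in Ioi 0, (1 - exp (-z)) ^ (p - 2) * exp (-q * z) * (1 - exp (-lam * z)) =
      Gamma p * Gamma (q + lam) / Gamma (p + q + lam - 1) -
        Gamma p * Gamma q / Gamma (p + q - 1) := by
  have h := mul_Gamma_mul_Gamma_div_Gamma_add (p := p) (s := q + lam) (by linarith)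
  rw [show p + (q + lam) - 1 = p + q + lam - 1 by ring] at h
  rw [one_sub_mul_integral_one_sub_exp_neg_rpow_mul_exp_mul_one_sub_exp hp hq hlam,
    integral_one_sub_exp_neg_rpow_mul_exp hp (by linarith),
    integral_one_sub_exp_neg_rpow_mul_exp hp hq, h, mul_Gamma_mul_Gamma_div_Gamma_add hpq]

theorem integral_exp_neg_mul_renewal_density {p q lam : ℝ} (hp : 0 < p) (hq : 0 < q)
    (hpq : 0 < p + q - 1) (hlam : 0 < lam) :
    ∫ x in Ioi 0, exp (-lam * x) * (Gamma q / Gamma (p + q - 1) +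
        (1 - p) / Gamma p * ∫ z in Ioi x, (1 - exp (-z)) ^ (p - 2) * exp (-q * z)) =
      Gamma (q + lam) / (lam * Gamma (p + q + lam - 1)) := by
  obtain ⟨hint, hlaplace⟩ := integral_exp_neg_mul_integral_Ioi hlam (by fun_prop)
    (integrableOn_one_sub_exp_neg_rpow_mul_exp_mul_one_sub_exp hp hq hlam.le)
  have hJ := one_sub_mul_integral_one_sub_exp_neg_rpow_mul_exp_mul_one_sub_exp_eq_Gamma hp hq
    hlam.le hpq
  have hΓp := (Gamma_pos_of_pos hp).ne'
  have hΓ0 := (Gamma_pos_of_pos hpq).ne'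
  have hΓlam := (Gamma_pos_of_pos (by linarith : 0 < p + q + lam - 1)).ne'
  simp_rw [mul_add, ← mul_assoc, mul_comm (exp (-lam * _)), mul_assoc]
  rw [integral_add ((exp_neg_integrableOn_Ioi 0 hlam).const_mul _) (hint.const_mul _),
    integral_const_mul, integral_const_mul, hlaplace, integral_exp_mul_Ioi (by linarith), mul_zero,
    exp_zero]
  generalize ∫ z in Ioi 0, (1 - exp (-z)) ^ (p - 2) * exp (-q * z) * (1 - exp (-lam * z)) = J
    at hJ ⊢
  field_simp at hJ ⊢
  linear_combination hJ

lemma exp_mul_mul_exp_sub_one_rpow {a b z : ℝ} (hz : 0 ≤ z) :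
    exp (a * z) * (exp z - 1) ^ (b - 2) = (1 - exp (-z)) ^ (b - 2) * exp (-(2 - a - b) * z) := by
  have hu : 0 ≤ 1 - exp (-z) := by simpa using hz
  rw [show exp z - 1 = exp z * (1 - exp (-z)) by rw [mul_one_sub, ← exp_add]; simp,
    mul_rpow (exp_pos z).le hu, ← exp_mul, ← mul_assoc, ← exp_add, mul_comm]
  congr 2
  ring

theorem descending_renewal_laplace_transform_big_alpha
    (α ρ : ℝ) (hα : α ∈ Set.Ioo (1:ℝ) 2) (hρ : ρ ∈ Set.Ioo (1 - 1/α) (1/α))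
    (lam : ℝ) (hlam : 0 < lam) :
    ∫ x in Set.Ioi (0:ℝ),
        Real.exp (-lam * x) *
          (Real.Gamma (2 - α) / Real.Gamma (1 - α * ρ) +
            (1 - α * (1 - ρ)) / Real.Gamma (α * (1 - ρ)) *
              ∫ z in Set.Ioi x,
                Real.exp (α * ρ * z) * (Real.exp z - 1) ^ (α * (1 - ρ) - 2)) =
    Real.Gamma (2 - α + lam) / (lam * Real.Gamma (1 - α * ρ + lam)) := by
  obtain ⟨hα1, hα2⟩ := hα
  have hαρ : α * ρ < 1 := by
    have := mul_lt_mul_of_pos_left hρ.2 (by linarith : 0 < α)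
    rwa [mul_one_div_cancel (by linarith)] at this
  have hαρ' : 0 < α * (1 - ρ) := by
    have : ρ < 1 := hρ.2.trans ((div_lt_one (by linarith)).2 hα1)
    nlinarith
  have h :=
    integral_exp_neg_mul_renewal_density hαρ' (by linarith : 0 < 2 - α) (by linarith) hlam
  rw [show α * (1 - ρ) + (2 - α) - 1 = 1 - α * ρ by ring,
    show α * (1 - ρ) + (2 - α) + lam - 1 = 1 - α * ρ + lam by ring] at h
  rw [← h]
  refine setIntegral_congr_fun measurableSet_Ioi fun x (hx : 0 < x) => ?_
  rw [setIntegral_congr_fun measurableSet_Ioi fun z (hz : x < z) =>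
    exp_mul_mul_exp_sub_one_rpow (a := α * ρ) (b := α * (1 - ρ)) (hx.trans hz).le,
    show 2 - α * ρ - α * (1 - ρ) = 2 - α by ring]
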